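/- arXiv:2003.12976 — 7 statements merged into one kernel-verified Lean document; each statement's English description precedes it below -/
import Mathlib

section
/- Let x* be a sparsest solution of the problem: minimize ‖x‖₀ subject to ‖y − Ax‖₂ ≤ ε and Bx ≤ b, and let S = supp(x*). Then Null(A_S) ∩ Null(B_S) = {0}, i.e., the submatrix formed by stacking A_S on top of B_S has full column rank. -/
open Matrix Finset

/-- The ℓ₂ norm of a finite real vector. -/
noncomputable def l2 {ι : Type*} [Fintype ι] (v : ι → ℝ) : ℝ := Real.sqrt (∑ i, v i ^ 2)

/-- The ℓ₀ "norm": number of nonzero components. -/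
noncomputable def l0 {n : ℕ} (x : Fin n → ℝ) : ℕ :=
  (Finset.univ.filter fun i => x i ≠ 0).card

/-- The support of a vector as a finset. -/
noncomputable def spt {n : ℕ} (x : Fin n → ℝ) : Finset (Fin n) :=
  Finset.univ.filter fun i => x i ≠ 0

/-- Membership in the feasible set T = {x : ‖y - Ax‖₂ ≤ ε, Bx ≤ b}. -/
def feasible {m l n : ℕ} (A : Matrix (Fin m) (Fin n) ℝ) (B : Matrix (Fin l) (Fin n) ℝ)
    (y : Fin m → ℝ) (b : Fin l → ℝ) (ε : ℝ) (x : Fin n → ℝ) : Prop :=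
  l2 (y - A.mulVec x) ≤ ε ∧ ∀ i, B.mulVec x i ≤ b i

/-- x is a sparsest solution: feasible and minimizing ‖·‖₀ over T. -/
noncomputable def sparsest {m l n : ℕ} (A : Matrix (Fin m) (Fin n) ℝ)
    (B : Matrix (Fin l) (Fin n) ℝ) (y : Fin m → ℝ) (b : Fin l → ℝ) (ε : ℝ)
    (x : Fin n → ℝ) : Prop :=
  feasible A B y b ε x ∧ ∀ z, feasible A B y b ε z → l0 x ≤ l0 z

/-- Column submatrix indexed by S. -/
def colSub {m n : ℕ} (A : Matrix (Fin m) (Fin n) ℝ) (S : Finset (Fin n)) :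
    Matrix (Fin m) {j // j ∈ S} ℝ :=
  A.submatrix id Subtype.val

/-- Row-and-column submatrix with rows in I and columns in S. -/
def rcSub {l n : ℕ} (B : Matrix (Fin l) (Fin n) ℝ) (I : Finset (Fin l))
    (S : Finset (Fin n)) : Matrix {i // i ∈ I} {j // j ∈ S} ℝ :=
  B.submatrix Subtype.val Subtype.val

/-- Active index set of the constraints Bx ≤ b at x. -/
noncomputable def activeSet {l n : ℕ} (B : Matrix (Fin l) (Fin n) ℝ) (b : Fin l → ℝ)
    (x : Fin n → ℝ) : Finset (Fin l) :=
  Finset.univ.filter fun i => B.mulVec x i = b i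

/-! If `A_S z = 0` and `B_S z = 0` with `z ≠ 0`, extend `z` by zero to `w`. Moving `x*` along
`w` changes neither `Ax` nor `Bx`, so the point stays feasible, and the step `t = -x*_j / z_j` at a
coordinate with `z_j ≠ 0` kills the `j`-th entry without leaving `S`: a sparser feasible point. -/

section SupportKernel

variable {n : ℕ}

noncomputable def zeroExtend (S : Finset (Fin n)) (z : {j // j ∈ S} → ℝ) : Fin n → ℝ :=
  fun j => if h : j ∈ S then z ⟨j, h⟩ else 0

lemma zeroExtend_apply_coe (S : Finset (Fin n)) (z : {j // j ∈ S} → ℝ) (j : {j // j ∈ S}) :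
    zeroExtend S z j = z j := by
  simp [zeroExtend]

lemma zeroExtend_apply_of_notMem {S : Finset (Fin n)} (z : {j // j ∈ S} → ℝ) {j : Fin n}
    (hj : j ∉ S) : zeroExtend S z j = 0 := by
  simp [zeroExtend, hj]

lemma mulVec_zeroExtend {k : ℕ} (M : Matrix (Fin k) (Fin n) ℝ) (S : Finset (Fin n))
    (z : {j // j ∈ S} → ℝ) : M *ᵥ zeroExtend S z = colSub M S *ᵥ z := by
  funext i
  calc (M *ᵥ zeroExtend S z) i = ∑ j ∈ S, M i j * zeroExtend S z j :=
        (Finset.sum_subset (Finset.subset_univ S) fun j _ hj => by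
          rw [zeroExtend_apply_of_notMem z hj, mul_zero]).symm
    _ = ∑ j : {j // j ∈ S}, M i j * z j := by
        rw [← Finset.sum_coe_sort]; simp only [zeroExtend_apply_coe]
    _ = (colSub M S *ᵥ z) i := rfl

lemma feasible_add_of_mulVec_eq_zero {m l : ℕ} {A : Matrix (Fin m) (Fin n) ℝ}
    {B : Matrix (Fin l) (Fin n) ℝ} {y : Fin m → ℝ} {b : Fin l → ℝ} {ε : ℝ} {x v : Fin n → ℝ}
    (hx : feasible A B y b ε x) (hA : A *ᵥ v = 0) (hB : B *ᵥ v = 0) :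
    feasible A B y b ε (x + v) := by
  simpa only [feasible, mulVec_add, hA, hB, add_zero] using hx

lemma mem_spt {x : Fin n → ℝ} {i : Fin n} : i ∈ spt x ↔ x i ≠ 0 := by
  simp [spt]

lemma spt_add_smul_zeroExtend_subset_erase {x : Fin n → ℝ} (z : {j // j ∈ spt x} → ℝ)
    {j : {j // j ∈ spt x}} (hj : z j ≠ 0) :
    spt (x + (-(x j / z j)) • zeroExtend (spt x) z) ⊆ (spt x).erase j := by
  intro i hi
  rw [mem_spt, Pi.add_apply, Pi.smul_apply, smul_eq_mul] at hi
  by_cases hiS : i ∈ spt x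
  · refine Finset.mem_erase.2 ⟨?_, hiS⟩
    rintro rfl
    apply hi
    rw [zeroExtend_apply_coe]
    field_simp
    ring
  · have hxi : x i = 0 := by simpa [mem_spt] using hiS
    simp [hxi, zeroExtend_apply_of_notMem z hiS] at hi

end SupportKernel

theorem stmt0_general {m l n : ℕ} (A : Matrix (Fin m) (Fin n) ℝ) (B : Matrix (Fin l) (Fin n) ℝ)
    (y : Fin m → ℝ) (b : Fin l → ℝ) (ε : ℝ)
    (xs : Fin n → ℝ) (hxs : sparsest A B y b ε xs)
    (S : Finset (Fin n)) (hS : S = spt xs) :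
    ∀ z : {j // j ∈ S} → ℝ,
      (colSub A S).mulVec z = 0 → (colSub B S).mulVec z = 0 → z = 0 := by
  subst hS
  intro z hA hB
  by_contra hz
  obtain ⟨j, hj⟩ := Function.ne_iff.1 hz
  set x' := xs + (-(xs j / z j)) • zeroExtend (spt xs) z
  have hfeas : feasible A B y b ε x' :=
    feasible_add_of_mulVec_eq_zero hxs.1 (by rw [mulVec_smul, mulVec_zeroExtend, hA, smul_zero])
      (by rw [mulVec_smul, mulVec_zeroExtend, hB, smul_zero])
  have hsparser : l0 x' < l0 xs :=
    (Finset.card_le_card (spt_add_smul_zeroExtend_subset_erase z hj)).trans_lt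
      (Finset.card_erase_lt_of_mem j.2)
  exact (hxs.2 x' hfeas).not_gt hsparser

/-- necessary condition: Null(A_S) ∩ Null(B_S) = {0}, i.e. the stacked
matrix [A_S; B_S] has full column rank. -/
theorem stmt0 {m l n : ℕ} (A : Matrix (Fin m) (Fin n) ℝ) (B : Matrix (Fin l) (Fin n) ℝ)
    (y : Fin m → ℝ) (b : Fin l → ℝ) (ε : ℝ) (hε : 0 ≤ ε)
    (xs : Fin n → ℝ) (hxs : sparsest A B y b ε xs)
    (S : Finset (Fin n)) (hS : S = spt xs) :
    ∀ z : {j // j ∈ S} → ℝ,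
      (colSub A S).mulVec z = 0 → (colSub B S).mulVec z = 0 → z = 0 :=
  stmt0_general A B y b ε xs hxs S hS
end

section
/- Let x* be a sparsest solution of the problem with support S and active index set I. Suppose there exists a nonzero d ∈ ℝ^S with A_S d = 0 and B_{I,S} d = 0 (so Null([A_S; B_{I,S}]) ≠ {0}), and that x* does not achieve the maximum of |I(x)| over all sparsest solutions x ∈ Λ. Then the problem has infinitely many sparsest solutions all having the same support S as x*. -/
open Matrix Finset

/-- case C1: if Null([A_S; B_{I,S}]) ≠ {0} and x* does not achieve the
maximal number of active constraints, there are infinitely many sparsest solutions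
with the same support as x*. -/
theorem stmt3 {m l n : ℕ} (A : Matrix (Fin m) (Fin n) ℝ) (B : Matrix (Fin l) (Fin n) ℝ)
    (y : Fin m → ℝ) (b : Fin l → ℝ) (ε : ℝ) (hε : 0 ≤ ε)
    (xs : Fin n → ℝ) (hxs : sparsest A B y b ε xs)
    (S : Finset (Fin n)) (hS : S = spt xs)
    (I : Finset (Fin l)) (hI : I = activeSet B b xs)
    (hker : ∃ d : {j // j ∈ S} → ℝ, d ≠ 0 ∧
      (colSub A S).mulVec d = 0 ∧ (rcSub B I S).mulVec d = 0)
    (hnotmax : ∃ z : Fin n → ℝ, sparsest A B y b ε z ∧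
      I.card < (activeSet B b z).card) :
    {z : Fin n → ℝ | sparsest A B y b ε z ∧ spt z = S}.Infinite := by
  obtain ⟨d, hd, hAd, hBd⟩ := hker
  classical
  set d' : Fin n → ℝ := fun j => if h : j ∈ S then d ⟨j, h⟩ else 0 with hd'def
  obtain ⟨j0, hj0⟩ : ∃ j, d j ≠ 0 := Function.ne_iff.mp hd
  have hd'j0 : d' j0.1 ≠ 0 := by simpa [hd'def, j0.2] using hj0
  -- sums against d' reduce to sums over the subtype
  have sum_eq : ∀ r : Fin n → ℝ, ∑ j, r j * d' j = ∑ j : {j // j ∈ S}, r j.1 * d j := by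
    intro r
    rw [← Finset.sum_subset (Finset.subset_univ S)
      (by intro j _ hj; simp [hd'def, hj])]
    rw [← Finset.sum_attach S (fun j => r j * d' j), Finset.univ_eq_attach]
    refine Finset.sum_congr rfl fun j _ => ?_
    simp [hd'def, j.2]
  have hAd' : A.mulVec d' = 0 := by
    funext i
    have h := congrFun hAd i
    simp only [Matrix.mulVec, dotProduct, colSub, Matrix.submatrix_apply, id,
      Pi.zero_apply] at h ⊢
    rw [sum_eq]; exact h
  have hBd' : ∀ i ∈ I, B.mulVec d' i = 0 := by
    intro i hi
    have h := congrFun hBd ⟨i, hi⟩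
    simp only [Matrix.mulVec, dotProduct, rcSub, Matrix.submatrix_apply,
      Pi.zero_apply] at h ⊢
    rw [sum_eq]; exact h
  have hxsS : ∀ j ∈ S, xs j ≠ 0 := by
    intro j hj; rw [hS, spt, Finset.mem_filter] at hj; exact hj.2
  have hxsI : ∀ i, i ∉ I → B.mulVec xs i < b i := by
    intro i hi
    rw [hI, activeSet, Finset.mem_filter] at hi
    push_neg at hi
    exact lt_of_le_of_ne (hxs.1.2 i) (hi (Finset.mem_univ i))
  -- the open set of good parameters
  set U : Set ℝ := {t | (∀ j ∈ S, xs j + t * d' j ≠ 0) ∧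
      ∀ i, i ∉ I → B.mulVec xs i + t * B.mulVec d' i < b i} with hUdef
  have hUopen : IsOpen U := by
    have : U = (⋂ j ∈ S, {t : ℝ | xs j + t * d' j ≠ 0}) ∩
        ⋂ i ∈ (Iᶜ : Finset (Fin l)), {t : ℝ | B.mulVec xs i + t * B.mulVec d' i < b i} := by
      ext t; simp [hUdef]
    rw [this]
    refine IsOpen.inter ?_ ?_
    · exact isOpen_biInter_finset fun j _ =>
        isOpen_ne_fun (by continuity) continuous_const
    · exact isOpen_biInter_finset fun i _ =>
        isOpen_lt (by continuity) continuous_const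
  have hU0 : (0 : ℝ) ∈ U := by
    constructor
    · intro j hj; simpa using hxsS j hj
    · intro i hi; simpa using hxsI i hi
  have hUinf : U.Infinite := by
    obtain ⟨δ, hδ, hball⟩ := Metric.isOpen_iff.mp hUopen 0 hU0
    have : Set.Ioo (0 - δ) (0 + δ) ⊆ U := by
      rw [← Real.ball_eq_Ioo]; exact hball
    exact (Set.Ioo_infinite (by linarith : (0:ℝ) - δ < 0 + δ)).mono this
  -- the map t ↦ xs + t • d'
  have hmem : ∀ t ∈ U, (xs + t • d') ∈
      {z : Fin n → ℝ | sparsest A B y b ε z ∧ spt z = S} := by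
    intro t ht
    obtain ⟨ht1, ht2⟩ := ht
    have happ : ∀ j, (xs + t • d') j = xs j + t * d' j := by intro j; simp
    have hspt : spt (xs + t • d') = S := by
      ext j
      simp only [spt, Finset.mem_filter, Finset.mem_univ, true_and, happ]
      constructor
      · intro h
        by_contra hj
        have h1 : xs j = 0 := by
          by_contra h2
          exact hj (by rw [hS, spt]; simp [h2])
        have h2 : d' j = 0 := by simp [hd'def, hj]
        simp [h1, h2] at h
      · intro hj; exact ht1 j hj
    have hfeas : feasible A B y b ε (xs + t • d') := by
      constructor
      · have : A.mulVec (xs + t • d') = A.mulVec xs := by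
          rw [Matrix.mulVec_add, Matrix.mulVec_smul, hAd']
          simp
        rw [this]; exact hxs.1.1
      · intro i
        have hlin : B.mulVec (xs + t • d') i = B.mulVec xs i + t * B.mulVec d' i := by
          rw [Matrix.mulVec_add, Matrix.mulVec_smul]; simp
        rw [hlin]
        by_cases hi : i ∈ I
        · rw [hBd' i hi]; simpa using hxs.1.2 i
        · exact le_of_lt (ht2 i hi)
    have hl0 : l0 (xs + t • d') = l0 xs := by
      have : spt xs = S := hS.symm
      simp only [l0]
      change (spt (xs + t • d')).card = (spt xs).card
      rw [hspt, this]
    exact ⟨⟨hfeas, fun z hz => hl0 ▸ hxs.2 z hz⟩, hspt⟩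
  have hinj : Set.InjOn (fun t : ℝ => xs + t • d') U := by
    intro s _ t _ h
    have := congrFun h j0.1
    simp only [Pi.add_apply, Pi.smul_apply, smul_eq_mul] at this
    have := add_left_cancel this
    exact mul_right_cancel₀ hd'j0 this
  have := (hUinf.image hinj)
  refine this.mono ?_
  rintro z ⟨t, ht, rfl⟩
  exact hmem t ht
end

section
/- Let x* be a sparsest solution with support S, active set I, inactive set Ī, satisfying ‖y − Ax*‖₂ < ε. Assume Null([A_S; B_{I,S}]) = {0} and Null(B_{Ī,S}) = {0}. If Null(B_{I,S}) ≠ {0}, then the problem has infinitely many sparsest solutions with the same support as x*. -/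
open Matrix Finset

/-- case D3: strict residual, Null([A_S; B_{I,S}]) = {0},
Null(B_{Ī,S}) = {0}, and Null(B_{I,S}) ≠ {0} give infinitely many sparsest
solutions with the same support. -/
theorem stmt7 {m l n : ℕ} (A : Matrix (Fin m) (Fin n) ℝ) (B : Matrix (Fin l) (Fin n) ℝ)
    (y : Fin m → ℝ) (b : Fin l → ℝ) (ε : ℝ) (hε : 0 < ε)
    (xs : Fin n → ℝ) (hxs : sparsest A B y b ε xs)
    (hres : l2 (y - A.mulVec xs) < ε)
    (S : Finset (Fin n)) (hS : S = spt xs)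
    (I : Finset (Fin l)) (hI : I = activeSet B b xs)
    (hker : ∀ d : {j // j ∈ S} → ℝ,
      (colSub A S).mulVec d = 0 → (rcSub B I S).mulVec d = 0 → d = 0)
    (hkerIbar : ∀ d : {j // j ∈ S} → ℝ, (rcSub B Iᶜ S).mulVec d = 0 → d = 0)
    (hkerI : ∃ d : {j // j ∈ S} → ℝ, d ≠ 0 ∧ (rcSub B I S).mulVec d = 0) :
    {z : Fin n → ℝ | sparsest A B y b ε z ∧ spt z = S}.Infinite := by

  classical
  obtain ⟨d, hd0, hdI⟩ := hkerI
  -- the extended direction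
  set e : Fin n → ℝ := fun j => if h : j ∈ S then d ⟨j, h⟩ else 0 with he
  have heS : ∀ j (h : j ∈ S), e j = d ⟨j, h⟩ := by
    intro j h; simp [he, h]
  have heS0 : ∀ j, j ∉ S → e j = 0 := by
    intro j h; simp [he, h]
  -- key sum identity
  have key : ∀ {k : ℕ} (r : Fin k → Fin n → ℝ) (i : Fin k),
      (∑ j, r i j * e j) = ∑ j : {j // j ∈ S}, r i j.val * d j := by
    intro k r i
    have h1 : (∑ j, r i j * e j) = ∑ j ∈ S, r i j * e j :=
      (Finset.sum_subset (Finset.subset_univ S)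
        (fun j _ hj => by rw [heS0 j hj, mul_zero])).symm
    rw [h1, ← Finset.sum_attach S (fun j => r i j * e j), Finset.univ_eq_attach]
    exact Finset.sum_congr rfl (fun j _ => by rw [heS j.val j.2])
  have hBeI : ∀ i (hi : i ∈ I), B.mulVec e i = 0 := by
    intro i hi
    have := congrFun hdI ⟨i, hi⟩
    simpa [Matrix.mulVec, dotProduct, rcSub, Matrix.submatrix, key B i] using this
  -- facts about xs
  have hxsS : ∀ j, j ∈ S → xs j ≠ 0 := by
    intro j hj; rw [hS] at hj; simpa [spt] using hj
  have hxs0 : ∀ j, j ∉ S → xs j = 0 := by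
    intro j hj; rw [hS] at hj; simpa [spt] using hj
  have hbI : ∀ i, i ∈ I → B.mulVec xs i = b i := by
    intro i hi; rw [hI] at hi; simpa [activeSet] using hi
  have hbIc : ∀ i, i ∉ I → B.mulVec xs i < b i := by
    intro i hi
    rw [hI] at hi
    simp only [activeSet, Finset.mem_filter, Finset.mem_univ, true_and] at hi
    exact lt_of_le_of_ne (hxs.1.2 i) hi
  -- e is nonzero
  obtain ⟨j0, hj0⟩ : ∃ j : {j // j ∈ S}, d j ≠ 0 := by
    by_contra h
    push_neg at h
    exact hd0 (funext h)
  have he0 : e j0.val ≠ 0 := by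
    rw [heS j0.val j0.2]
    simpa using hj0
  -- the family of solutions
  have hmv : ∀ (t : ℝ), A.mulVec (xs + t • e) = A.mulVec xs + t • A.mulVec e := by
    intro t; rw [Matrix.mulVec_add, Matrix.mulVec_smul]
  have hmvB : ∀ (t : ℝ), B.mulVec (xs + t • e) = B.mulVec xs + t • B.mulVec e := by
    intro t; rw [Matrix.mulVec_add, Matrix.mulVec_smul]
  -- the open set of good parameters
  set U : Set ℝ := {t | l2 (y - A.mulVec (xs + t • e)) < ε ∧
      (∀ i, i ∉ I → B.mulVec (xs + t • e) i < b i) ∧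
      (∀ j, j ∈ S → xs j + t * e j ≠ 0)} with hUdef
  have hUnhds : U ∈ nhds (0 : ℝ) := by
    have h1 : ∀ᶠ t : ℝ in nhds 0, l2 (y - A.mulVec (xs + t • e)) < ε := by
      have hc : Continuous fun t : ℝ => l2 (y - A.mulVec (xs + t • e)) := by
        unfold l2
        apply Real.continuous_sqrt.comp
        apply continuous_finset_sum
        intro i _
        have : (fun t : ℝ => (y - A.mulVec (xs + t • e)) i) =
            fun t : ℝ => y i - (A.mulVec xs i + t * A.mulVec e i) := by
          funext t
          simp [hmv t]
        rw [show (fun t : ℝ => (y - A.mulVec (xs + t • e)) i ^ 2) =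
            fun t : ℝ => (y i - (A.mulVec xs i + t * A.mulVec e i)) ^ 2 by
          funext t; rw [congrFun this t]]
        fun_prop
      have h0 : l2 (y - A.mulVec (xs + (0:ℝ) • e)) < ε := by simpa using hres
      exact Filter.Tendsto.eventually_lt_const h0 (hc.tendsto 0)
    have h2 : ∀ᶠ t : ℝ in nhds 0, ∀ i, i ∉ I → B.mulVec (xs + t • e) i < b i := by
      rw [Filter.eventually_all]
      intro i
      by_cases hi : i ∈ I
      · filter_upwards with t hit; exact absurd hi hit
      · have hc : Continuous fun t : ℝ => B.mulVec (xs + t • e) i := by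
          have : (fun t : ℝ => B.mulVec (xs + t • e) i) =
              fun t : ℝ => B.mulVec xs i + t * B.mulVec e i := by
            funext t; simp [hmvB t]
          rw [this]; fun_prop
        have h0 : B.mulVec (xs + (0:ℝ) • e) i < b i := by simpa using hbIc i hi
        have := Filter.Tendsto.eventually_lt_const h0 (hc.tendsto 0)
        filter_upwards [this] with t ht _
        exact ht
    have h3 : ∀ᶠ t : ℝ in nhds 0, ∀ j, j ∈ S → xs j + t * e j ≠ 0 := by
      rw [Filter.eventually_all]
      intro j
      by_cases hj : j ∈ S
      · have hc : Continuous fun t : ℝ => xs j + t * e j := by fun_prop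
        have h0 : xs j + (0:ℝ) * e j ≠ 0 := by simpa using hxsS j hj
        have : ∀ᶠ t : ℝ in nhds 0, xs j + t * e j ≠ 0 := by
          have : {x : ℝ | x ≠ 0} ∈ nhds (xs j + (0:ℝ) * e j) :=
            isOpen_compl_singleton.mem_nhds h0
          exact (hc.tendsto 0).eventually this
        filter_upwards [this] with t ht _
        exact ht
      · filter_upwards with t hjS; exact absurd hjS hj
    filter_upwards [h1, h2, h3] with t ht1 ht2 ht3
    exact ⟨ht1, ht2, ht3⟩
  have hUinf : U.Infinite := infinite_of_mem_nhds (0:ℝ) hUnhds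
  -- each t in U gives a sparsest solution with support S
  have hgood : ∀ t ∈ U, sparsest A B y b ε (xs + t • e) ∧ spt (xs + t • e) = S := by
    intro t ht
    obtain ⟨ht1, ht2, ht3⟩ := ht
    have hspt : spt (xs + t • e) = S := by
      ext j
      simp only [spt, Finset.mem_filter, Finset.mem_univ, true_and, Pi.add_apply,
        Pi.smul_apply, smul_eq_mul]
      constructor
      · intro h
        by_contra hjS
        exact h (by rw [hxs0 j hjS, heS0 j hjS]; ring)
      · intro hjS
        exact ht3 j hjS
    have hl0 : l0 (xs + t • e) = l0 xs := by
      have h1 : l0 (xs + t • e) = (spt (xs + t • e)).card := rfl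
      have h2 : l0 xs = (spt xs).card := rfl
      rw [h1, h2, hspt, hS]
    have hfeas : feasible A B y b ε (xs + t • e) := by
      constructor
      · exact le_of_lt ht1
      · intro i
        by_cases hi : i ∈ I
        · have : B.mulVec (xs + t • e) i = b i := by
            rw [hmvB t]
            simp [hbI i hi, hBeI i hi]
          exact le_of_eq this
        · exact le_of_lt (ht2 i hi)
    refine ⟨⟨hfeas, ?_⟩, hspt⟩
    intro z hz
    rw [hl0]
    exact hxs.2 z hz
  -- conclude
  have himg : (fun t : ℝ => xs + t • e) '' U ⊆
      {z : Fin n → ℝ | sparsest A B y b ε z ∧ spt z = S} := by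
    rintro _ ⟨t, ht, rfl⟩
    exact hgood t ht
  have hinj : Set.InjOn (fun t : ℝ => xs + t • e) U := by
    intro t1 _ t2 _ h
    have := congrFun h j0.val
    simp only [Pi.add_apply, Pi.smul_apply, smul_eq_mul] at this
    have := add_left_cancel this
    exact mul_right_cancel₀ he0 this
  exact Set.Infinite.mono himg (hUinf.image hinj)
end

section
/- Let x* be a sparsest solution with support S, active set I, inactive set Ī, satisfying ‖y − Ax*‖₂ < ε. Assume Null([A_S; B_{I,S}]) = {0} and Null(B_{Ī,S}) = {0}. If there exists d ∈ ℝ^S with B_{I,S} d > 0 componentwise and A_S d ≠ 0, then the problem has infinitely many sparsest solutions with the same support as x*. -/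
open Matrix Finset

/-- case D4: strict residual, Null([A_S; B_{I,S}]) = {0},
Null(B_{Ī,S}) = {0}, and ∃ d with B_{I,S} d > 0 and A_S d ≠ 0 give infinitely many
sparsest solutions with the same support. -/
theorem stmt8 {m l n : ℕ} (A : Matrix (Fin m) (Fin n) ℝ) (B : Matrix (Fin l) (Fin n) ℝ)
    (y : Fin m → ℝ) (b : Fin l → ℝ) (ε : ℝ) (hε : 0 < ε)
    (xs : Fin n → ℝ) (hxs : sparsest A B y b ε xs)
    (hres : l2 (y - A.mulVec xs) < ε)
    (S : Finset (Fin n)) (hS : S = spt xs)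
    (I : Finset (Fin l)) (hI : I = activeSet B b xs)
    (hker : ∀ d : {j // j ∈ S} → ℝ,
      (colSub A S).mulVec d = 0 → (rcSub B I S).mulVec d = 0 → d = 0)
    (hkerIbar : ∀ d : {j // j ∈ S} → ℝ, (rcSub B Iᶜ S).mulVec d = 0 → d = 0)
    (hd : ∃ d : {j // j ∈ S} → ℝ,
      (∀ i, 0 < (rcSub B I S).mulVec d i) ∧ (colSub A S).mulVec d ≠ 0) :
    {z : Fin n → ℝ | sparsest A B y b ε z ∧ spt z = S}.Infinite := by
  classical
  obtain ⟨hfeas, hmin⟩ := hxs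
  obtain ⟨d, hdpos, hdA⟩ := hd
  -- extend d by zero outside S
  set dt : Fin n → ℝ := fun j => if h : j ∈ S then d ⟨j, h⟩ else 0 with hdtdef
  have hdtS : ∀ j : {j // j ∈ S}, dt j.val = d j := by
    intro j; simp [hdtdef, j.2]
  have hdtnS : ∀ j, j ∉ S → dt j = 0 := by
    intro j hj; simp [hdtdef, hj]
  have hext : ∀ {k : ℕ} (M : Matrix (Fin k) (Fin n) ℝ) (i : Fin k),
      M.mulVec dt i = ∑ j : {j // j ∈ S}, M i j.val * d j := by
    intro k M i
    rw [Matrix.mulVec, dotProduct]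
    rw [← Finset.sum_subset (Finset.subset_univ S)
      (by intro j _ hj; rw [hdtnS j hj, mul_zero])]
    rw [← Finset.sum_coe_sort S (fun j => M i j * dt j)]
    exact Finset.sum_congr rfl fun j _ => by rw [hdtS j]
  -- dt ≠ 0
  have hd0 : d ≠ 0 := by
    intro h; rw [h] at hdA; exact hdA (Matrix.mulVec_zero _)
  obtain ⟨j0, hj0⟩ : ∃ j, d j ≠ 0 := by
    by_contra h; push_neg at h; exact hd0 (funext h)
  have hdt0 : dt j0.val ≠ 0 := by rw [hdtS j0]; exact hj0
  -- membership characterizations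
  have hSmem : ∀ j, j ∈ S ↔ xs j ≠ 0 := by
    intro j; rw [hS]; simp [spt]
  have hImem : ∀ i, i ∈ I ↔ B.mulVec xs i = b i := by
    intro i; rw [hI]; simp [activeSet]
  -- the family of candidate solutions
  set f : ℝ → (Fin n → ℝ) := fun t => xs - t • dt with hfdef
  have hfj : ∀ t j, f t j = xs j - t * dt j := by intro t j; simp [hfdef]
  have hBf : ∀ t i, B.mulVec (f t) i = B.mulVec xs i - t * B.mulVec dt i := by
    intro t i
    rw [hfdef]
    simp [Matrix.mulVec_sub, Matrix.mulVec_smul, Pi.sub_apply, smul_eq_mul]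
  have hAf : ∀ t, y - A.mulVec (f t) = (y - A.mulVec xs) + t • A.mulVec dt := by
    intro t
    rw [hfdef]
    rw [Matrix.mulVec_sub, Matrix.mulVec_smul]
    abel
  -- continuity of l2
  have hl2cont : Continuous fun v : Fin m → ℝ => l2 v := by
    unfold l2
    exact (continuous_finset_sum _ fun i _ =>
      ((continuous_apply i).pow 2)).sqrt
  set F := nhdsWithin (0 : ℝ) (Set.Ioi 0) with hF
  -- eventually: residual constraint
  have E1 : ∀ᶠ t in F, l2 (y - A.mulVec (f t)) ≤ ε := by
    have hc : Continuous fun t : ℝ => l2 ((y - A.mulVec xs) + t • A.mulVec dt) :=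
      hl2cont.comp (continuous_const.add (continuous_id.smul continuous_const))
    have h0 : Filter.Tendsto (fun t : ℝ => l2 ((y - A.mulVec xs) + t • A.mulVec dt))
        F (nhds (l2 (y - A.mulVec xs))) := by
      have := hc.tendsto 0
      simpa using this.mono_left nhdsWithin_le_nhds
    have := h0.eventually_lt_const hres
    filter_upwards [this] with t ht
    rw [hAf t]; exact le_of_lt ht
  -- eventually: inequality constraints
  have E2 : ∀ᶠ t in F, ∀ i, B.mulVec (f t) i ≤ b i := by
    rw [Filter.eventually_all]
    intro i
    by_cases hi : i ∈ I
    · have hpos : 0 < B.mulVec dt i := by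
        have := hdpos ⟨i, hi⟩
        rwa [show (rcSub B I S).mulVec d ⟨i, hi⟩ = B.mulVec dt i by
          rw [hext B i]; rfl] at this
      filter_upwards [self_mem_nhdsWithin] with t ht
      rw [hBf t i, (hImem i).1 hi]
      have : 0 < t * B.mulVec dt i := mul_pos ht hpos
      linarith
    · have hlt : B.mulVec xs i < b i :=
        lt_of_le_of_ne (hfeas.2 i) (fun h => hi ((hImem i).2 h))
      have hc : Continuous fun t : ℝ => B.mulVec xs i - t * B.mulVec dt i :=
        continuous_const.sub (continuous_id.mul continuous_const)
      have h0 : Filter.Tendsto (fun t : ℝ => B.mulVec xs i - t * B.mulVec dt i)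
          F (nhds (B.mulVec xs i)) := by
        have := hc.tendsto 0
        simpa using this.mono_left nhdsWithin_le_nhds
      filter_upwards [h0.eventually_lt_const hlt] with t ht
      rw [hBf t i]; exact le_of_lt ht
  -- eventually: support is exactly S
  have E3 : ∀ᶠ t in F, spt (f t) = S := by
    have : ∀ᶠ t in F, ∀ j, j ∈ S → f t j ≠ 0 := by
      rw [Filter.eventually_all]
      intro j
      by_cases hj : j ∈ S
      · have hne : xs j ≠ 0 := (hSmem j).1 hj
        have hc : Continuous fun t : ℝ => xs j - t * dt j :=
          continuous_const.sub (continuous_id.mul continuous_const)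
        have h0 : Filter.Tendsto (fun t : ℝ => xs j - t * dt j)
            F (nhds (xs j)) := by
          have := hc.tendsto 0
          simpa using this.mono_left nhdsWithin_le_nhds
        filter_upwards [h0.eventually_ne hne] with t ht _
        rw [hfj t j]; exact ht
      · exact Filter.Eventually.of_forall fun t h => absurd h hj
    filter_upwards [this] with t ht
    ext j
    simp only [spt, Finset.mem_filter, Finset.mem_univ, true_and]
    constructor
    · intro hne
      by_contra hj
      apply hne
      rw [hfj t j, hdtnS j hj, ((hSmem j).not_left.1 hj : xs j = 0)]
      ring
    · exact ht j
  -- combine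
  have Eall : ∀ᶠ t in F,
      f t ∈ {z : Fin n → ℝ | sparsest A B y b ε z ∧ spt z = S} := by
    filter_upwards [E1, E2, E3] with t h1 h2 h3
    refine ⟨⟨⟨h1, h2⟩, ?_⟩, h3⟩
    intro z hz
    have hcard : l0 (f t) = l0 xs := by
      have h4 : spt (f t) = spt xs := by rw [h3, hS]
      show (spt (f t)).card = (spt xs).card
      rw [h4]
    rw [hcard]; exact hmin z hz
  -- the good set of parameters is infinite
  have hGmem : {t : ℝ | f t ∈ {z : Fin n → ℝ | sparsest A B y b ε z ∧ spt z = S}} ∈ F :=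
    Eall
  obtain ⟨u, hu, hsub⟩ := mem_nhdsGT_iff_exists_Ioo_subset.1 hGmem
  have hIooInf : (Set.Ioo (0 : ℝ) u).Infinite := Set.Ioo_infinite hu
  have hinj : Function.Injective f := by
    intro t t' h
    have := congrFun h j0.val
    rw [hfj, hfj] at this
    have : t * dt j0.val = t' * dt j0.val := by linarith
    exact mul_right_cancel₀ hdt0 this
  have : (f '' Set.Ioo 0 u).Infinite :=
    hIooInf.image (hinj.injOn)
  refine this.mono ?_
  rintro z ⟨t, ht, rfl⟩
  exact hsub ht
end

section
/- Let k be the optimal value of: minimize ‖x‖₀ subject to ‖y − Ax‖₂ ≤ ε, Bx ≤ b. If for every subset Π ⊆ {1,…,n} with |Π| = k one has {η ∈ ℝ^Π : A_Π η = 0} ∩ {η ∈ ℝ^Π : B_Π η ≤ 0} = {0}, then the set Λ of sparsest solutions is bounded. -/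
open Matrix Finset

private lemma abs_le_l2' {ι : Type*} [Fintype ι] (v : ι → ℝ) (i : ι) : |v i| ≤ l2 v := by
  rw [l2, ← Real.sqrt_sq_eq_abs]
  exact Real.sqrt_le_sqrt (Finset.single_le_sum (fun j _ => sq_nonneg (v j)) (Finset.mem_univ i))

private lemma mulVec_colSub' {m n : ℕ} (A : Matrix (Fin m) (Fin n) ℝ) (P : Finset (Fin n))
    (x : Fin n → ℝ) (hx : ∀ j ∉ P, x j = 0) (i : Fin m) :
    ∑ j : {j // j ∈ P}, colSub A P i j * x j.1 = A.mulVec x i := by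
  simp only [Matrix.mulVec, dotProduct, colSub, Matrix.submatrix_apply, id]
  rw [Finset.sum_coe_sort P (fun j => A i j * x j)]
  exact Finset.sum_subset (Finset.subset_univ P)
    (fun j _ hj => by rw [hx j hj, mul_zero])

private lemma key2 {m l : ℕ} {ι : Type*} [Fintype ι] (A : Matrix (Fin m) ι ℝ) (B : Matrix (Fin l) ι ℝ)
    (C : ℝ) (hC : 0 ≤ C)
    (h0 : ∀ η : ι → ℝ, (∀ i, ∑ j, A i j * η j = 0) → (∀ i, ∑ j, B i j * η j ≤ 0) → η = 0) :
    ∃ M : ℝ, 0 ≤ M ∧ ∀ u : ι → ℝ,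
      (∑ i, |∑ j, A i j * u j| + ∑ i, max (∑ j, B i j * u j) 0 ≤ C) → ∀ j, |u j| ≤ M := by
  cases isEmpty_or_nonempty ι with
  | inl h => exact ⟨0, le_refl 0, fun u _ j => (IsEmpty.false j).elim⟩
  | inr h =>
    set g : (ι → ℝ) → ℝ := fun η => ∑ i, |∑ j, A i j * η j| + ∑ i, max (∑ j, B i j * η j) 0
      with hg
    have hcont : Continuous g := by
      apply Continuous.add
      · exact continuous_finset_sum _ fun i _ =>
          (continuous_finset_sum _ fun j _ => (continuous_const.mul (continuous_apply j))).abs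
      · exact continuous_finset_sum _ fun i _ =>
          (continuous_finset_sum _ fun j _ => (continuous_const.mul (continuous_apply j))).max
            continuous_const
    have hsph : (Metric.sphere (0 : ι → ℝ) 1).Nonempty :=
      NormedSpace.sphere_nonempty.mpr zero_le_one
    obtain ⟨η₀, hη₀s, hmin⟩ := (isCompact_sphere (0 : ι → ℝ) 1).exists_isMinOn hsph
      hcont.continuousOn
    have hpos : ∀ η : ι → ℝ, η ≠ 0 → 0 < g η := by
      intro η hη
      rcases lt_or_eq_of_le (by positivity : (0:ℝ) ≤ g η) with h | h
      · exact h
      exfalso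
      have hAn : (0:ℝ) ≤ ∑ i, |∑ j, A i j * η j| :=
        Finset.sum_nonneg fun i _ => abs_nonneg _
      have hBn : (0:ℝ) ≤ ∑ i, max (∑ j, B i j * η j) 0 :=
        Finset.sum_nonneg fun i _ => le_max_right _ 0
      have hsum : ∑ i, |∑ j, A i j * η j| + ∑ i, max (∑ j, B i j * η j) 0 = 0 := h.symm
      have h1 : ∑ i, |∑ j, A i j * η j| = 0 ∧ ∑ i, max (∑ j, B i j * η j) 0 = 0 := by
        constructor <;> linarith
      apply hη
      apply h0
      · intro i
        have := (Finset.sum_eq_zero_iff_of_nonneg (fun i _ => abs_nonneg _)).mp h1.1 i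
          (Finset.mem_univ i)
        exact abs_eq_zero.mp this
      · intro i
        have := (Finset.sum_eq_zero_iff_of_nonneg (fun i (_ : i ∈ Finset.univ) =>
          le_max_right (∑ j, B i j * η j) 0)).mp h1.2 i (Finset.mem_univ i)
        have := le_of_eq this.symm  -- max s 0 = 0 → s ≤ 0
        exact le_trans (le_max_left _ 0) (le_of_eq ((Finset.sum_eq_zero_iff_of_nonneg (fun i (_ : i ∈ Finset.univ) =>
          le_max_right (∑ j, B i j * η j) 0)).mp h1.2 i (Finset.mem_univ i)))
    have hc : 0 < g η₀ := hpos η₀ (by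
      intro h
      rw [h] at hη₀s
      simp at hη₀s)
    set c := g η₀ with hcdef
    have hhom : ∀ (t : ℝ), 0 ≤ t → ∀ η, g (t • η) = t * g η := by
      intro t ht η
      simp only [hg, Pi.smul_apply, smul_eq_mul]
      rw [mul_add, Finset.mul_sum, Finset.mul_sum]
      congr 1
      · apply Finset.sum_congr rfl; intro i _
        rw [show ∑ j, A i j * (t * η j) = t * ∑ j, A i j * η j by
          rw [Finset.mul_sum]; apply Finset.sum_congr rfl; intro j _; ring]
        rw [abs_mul, abs_of_nonneg ht]
      · apply Finset.sum_congr rfl; intro i _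
        rw [show ∑ j, B i j * (t * η j) = t * ∑ j, B i j * η j by
          rw [Finset.mul_sum]; apply Finset.sum_congr rfl; intro j _; ring]
        rw [mul_max_of_nonneg _ _ ht, mul_zero]
    refine ⟨C / c, div_nonneg hC hc.le, fun u hu j => ?_⟩
    rcases eq_or_ne u 0 with rfl | hune
    · simpa using div_nonneg hC hc.le
    have hnu : 0 < ‖u‖ := norm_pos_iff.mpr hune
    have hη : (‖u‖⁻¹ • u) ∈ Metric.sphere (0 : ι → ℝ) 1 := by
      simp [norm_smul, abs_of_nonneg (inv_nonneg.mpr hnu.le), inv_mul_cancel₀ hnu.ne']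
    have : c ≤ g (‖u‖⁻¹ • u) := hmin hη
    have hgu : g u = ‖u‖ * g (‖u‖⁻¹ • u) := by
      rw [← hhom ‖u‖ hnu.le, smul_smul, mul_inv_cancel₀ hnu.ne', one_smul]
    have hub : ‖u‖ * c ≤ C := by
      calc ‖u‖ * c ≤ ‖u‖ * g (‖u‖⁻¹ • u) := by nlinarith
        _ = g u := hgu.symm
        _ ≤ C := hu
    have : ‖u‖ ≤ C / c := (le_div_iff₀ hc).mpr hub
    calc |u j| = ‖u j‖ := (Real.norm_eq_abs _).symm
      _ ≤ ‖u‖ := norm_le_pi_norm u j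
      _ ≤ C / c := this


/-- E1: if for every k-element index set P the only η with A_P η = 0
and B_P η ≤ 0 is η = 0, then the sparsest-solution set is bounded. -/
theorem stmt10 {m l n : ℕ} (A : Matrix (Fin m) (Fin n) ℝ) (B : Matrix (Fin l) (Fin n) ℝ)
    (y : Fin m → ℝ) (b : Fin l → ℝ) (ε : ℝ) (hε : 0 ≤ ε)
    (k : ℕ) (hk : ∃ x : Fin n → ℝ, sparsest A B y b ε x ∧ l0 x = k)
    (hP : ∀ P : Finset (Fin n), P.card = k →
      ∀ η : {j // j ∈ P} → ℝ, (colSub A P).mulVec η = 0 →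
        (∀ i, (colSub B P).mulVec η i ≤ 0) → η = 0) :
    ∃ M : ℝ, ∀ x : Fin n → ℝ, sparsest A B y b ε x → ∀ i, |x i| ≤ M := by
  obtain ⟨x₀, hx₀s, hx₀k⟩ := hk
  have hall : ∀ x : Fin n → ℝ, sparsest A B y b ε x → (spt x).card = k := by
    intro x hx
    have h1 : l0 x ≤ k := hx₀k ▸ hx.2 x₀ hx₀s.1
    have h2 : k ≤ l0 x := hx₀k ▸ hx₀s.2 x hx.1
    exact le_antisymm h1 h2
  have hPM : ∀ P : Finset (Fin n), ∃ M : ℝ, 0 ≤ M ∧ (P.card = k →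
      ∀ x : Fin n → ℝ, feasible A B y b ε x → (∀ j ∉ P, x j = 0) → ∀ i, |x i| ≤ M) := by
    intro P
    by_cases hc : P.card = k
    · have hC : (0:ℝ) ≤ ∑ i, (ε + |y i|) + ∑ i, |b i| := by
        have := Finset.sum_nonneg (fun i (_ : i ∈ (Finset.univ : Finset (Fin m))) =>
          add_nonneg hε (abs_nonneg (y i)))
        have := Finset.sum_nonneg (fun i (_ : i ∈ (Finset.univ : Finset (Fin l))) =>
          abs_nonneg (b i))
        linarith
      obtain ⟨M, hM0, hM⟩ := key2 (colSub A P) (colSub B P) (∑ i, (ε + |y i|) + ∑ i, |b i|) hC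
        (fun η hA hB => hP P hc η
          (funext fun i => by simpa [Matrix.mulVec, dotProduct] using hA i)
          (fun i => by simpa [Matrix.mulVec, dotProduct] using hB i))
      refine ⟨M, hM0, fun _ x hx hsupp i => ?_⟩
      have hbound : ∑ i, |∑ j : {j // j ∈ P}, colSub A P i j * x j.1| +
          ∑ i, max (∑ j : {j // j ∈ P}, colSub B P i j * x j.1) 0 ≤
          ∑ i, (ε + |y i|) + ∑ i, |b i| := by
        apply add_le_add
        · apply Finset.sum_le_sum
          intro i _
          rw [mulVec_colSub' A P x hsupp i]
          have h1 : |(y - A.mulVec x) i| ≤ ε := le_trans (abs_le_l2' _ i) hx.1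
          have h2 : |A.mulVec x i| = |y i - (y - A.mulVec x) i| := by
            congr 1; simp
          rw [h2]
          calc |y i - (y - A.mulVec x) i| ≤ |y i| + |(y - A.mulVec x) i| := abs_sub _ _
            _ ≤ ε + |y i| := by linarith
        · apply Finset.sum_le_sum
          intro i _
          rw [mulVec_colSub' B P x hsupp i]
          exact max_le (le_trans (hx.2 i) (le_abs_self _)) (abs_nonneg _)
      by_cases hiP : i ∈ P
      · exact hM (fun j => x j.1) hbound ⟨i, hiP⟩
      · rw [hsupp i hiP]; simpa using hM0
    · exact ⟨0, le_refl 0, fun h => absurd h hc⟩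
  choose f hf0 hf using hPM
  refine ⟨(Finset.univ : Finset (Finset (Fin n))).sup' ⟨∅, Finset.mem_univ ∅⟩ f,
    fun x hx i => ?_⟩
  have hsupp : ∀ j ∉ spt x, x j = 0 := by
    intro j hj
    by_contra hxj
    exact hj (Finset.mem_filter.mpr ⟨Finset.mem_univ j, hxj⟩)
  exact le_trans (hf (spt x) (hall x hx) x hx.1 hsupp i)
    (Finset.le_sup' f (Finset.mem_univ (spt x)))
end

section
/- Let k be the optimal value of: minimize ‖x‖₀ subject to ‖y − Ax‖₂ ≤ ε, Bx ≤ b. If every set of k columns of A is linearly independent (in particular if k < spark(A), the minimum number of linearly dependent columns of A), then the set Λ of sparsest solutions is bounded. -/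
open Matrix Finset

lemma anti_of_inj {ι κ : Type*} [Fintype ι] [Fintype κ]
    (f : (ι → ℝ) →ₗ[ℝ] (κ → ℝ)) (hf : Function.Injective f) :
    ∃ C : ℝ, 0 ≤ C ∧ ∀ v, ‖v‖ ≤ C * ‖f v‖ := by
  let e : (ι → ℝ) ≃ₗ[ℝ] LinearMap.range f := LinearEquiv.ofInjective f hf
  let e' := e.toContinuousLinearEquiv
  refine ⟨‖(e'.symm : LinearMap.range f →L[ℝ] (ι → ℝ))‖,
    ContinuousLinearMap.opNorm_nonneg _, fun v => ?_⟩
  have h1 : v = e'.symm (e' v) := (e'.symm_apply_apply v).symm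
  calc ‖v‖ = ‖e'.symm (e' v)‖ := by rw [← h1]
    _ ≤ ‖(e'.symm : LinearMap.range f →L[ℝ] (ι → ℝ))‖ * ‖e' v‖ :=
        (e'.symm : LinearMap.range f →L[ℝ] (ι → ℝ)).le_opNorm _
    _ = _ := by congr 1

/-- E2/E3: if every k columns of A are linearly independent, the
sparsest-solution set is bounded. -/
theorem stmt11 {m l n : ℕ} (A : Matrix (Fin m) (Fin n) ℝ) (B : Matrix (Fin l) (Fin n) ℝ)
    (y : Fin m → ℝ) (b : Fin l → ℝ) (ε : ℝ) (hε : 0 ≤ ε)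
    (k : ℕ) (hk : ∃ x : Fin n → ℝ, sparsest A B y b ε x ∧ l0 x = k)
    (hcols : ∀ P : Finset (Fin n), P.card = k →
      ∀ η : {j // j ∈ P} → ℝ, (colSub A P).mulVec η = 0 → η = 0) :
    ∃ M : ℝ, ∀ x : Fin n → ℝ, sparsest A B y b ε x → ∀ i, |x i| ≤ M := by
  classical
  obtain ⟨x0, hx0, hx0k⟩ := hk
  -- per-support antilipschitz constants
  have key : ∀ S : Finset (Fin n), ∃ C : ℝ, 0 ≤ C ∧ (S.card = k →
      ∀ η : {j // j ∈ S} → ℝ, ‖η‖ ≤ C * ‖(colSub A S).mulVec η‖) := by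
    intro S
    by_cases h : S.card = k
    · have hinj : Function.Injective (colSub A S).mulVecLin := by
        rw [← LinearMap.ker_eq_bot, LinearMap.ker_eq_bot']
        intro η hη
        exact hcols S h η hη
      obtain ⟨C, hC0, hC⟩ := anti_of_inj (colSub A S).mulVecLin hinj
      exact ⟨C, hC0, fun _ η => hC η⟩
    · exact ⟨0, le_rfl, fun hh => absurd hh h⟩
  choose C hC0 hC using key
  have hyε : (0:ℝ) ≤ ‖y‖ + ε := by positivity
  set D : ℝ := Finset.univ.sup' ⟨∅, Finset.mem_univ ∅⟩ C with hD
  refine ⟨D * (‖y‖ + ε), ?_⟩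
  have hDnn : 0 ≤ D := le_trans (hC0 ∅) (Finset.le_sup' C (Finset.mem_univ ∅))
  intro x hx i
  -- the support has card k
  have hlk : l0 x = k := le_antisymm (hx0k ▸ hx.2 x0 hx0.1) (hx0k ▸ hx0.2 x hx.1)
  have hScard : (spt x).card = k := hlk
  set S := spt x with hS
  by_cases hi : i ∈ S
  · set η : {j // j ∈ S} → ℝ := fun j => x j.1 with hη
    -- A.mulVec x = (colSub A S).mulVec η
    have hAx : ∀ i', A.mulVec x i' = (colSub A S).mulVec η i' := by
      intro i'
      show ∑ j, A i' j * x j = ∑ j : {j // j ∈ S}, A i' j.1 * x j.1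
      rw [Finset.sum_coe_sort S (fun j => A i' j * x j)]
      apply (Finset.sum_subset (Finset.subset_univ S) ?_).symm
      intro j _ hj
      have : x j = 0 := by
        by_contra hxj
        exact hj (by simp [hS, spt, hxj])
      simp [this]
    -- componentwise residual bound
    have hres : ∀ i', |y i' - A.mulVec x i'| ≤ ε := by
      intro i'
      have h1 : ((y - A.mulVec x) i') ^ 2 ≤ ∑ i'', ((y - A.mulVec x) i'') ^ 2 :=
        Finset.single_le_sum (f := fun i'' => ((y - A.mulVec x) i'')^2) (fun i'' _ => sq_nonneg _) (Finset.mem_univ i')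
      have h2 : |(y - A.mulVec x) i'| ≤ l2 (y - A.mulVec x) := by
        rw [← Real.sqrt_sq_eq_abs]
        exact Real.sqrt_le_sqrt h1
      simpa using h2.trans hx.1.1
    have hAxb : ‖(colSub A S).mulVec η‖ ≤ ‖y‖ + ε := by
      rw [pi_norm_le_iff_of_nonneg hyε]
      intro i'
      rw [← hAx i', Real.norm_eq_abs]
      have := hres i'
      have h3 : |A.mulVec x i'| ≤ |y i'| + ε := by
        have := abs_sub_abs_le_abs_sub (A.mulVec x i') (y i')
        rw [abs_sub_comm] at this
        linarith [hres i']
      have hyi : |y i'| ≤ ‖y‖ := by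
        simpa [Real.norm_eq_abs] using norm_le_pi_norm y i'
      linarith
    have hbound : ‖η‖ ≤ C S * (‖y‖ + ε) := by
      calc ‖η‖ ≤ C S * ‖(colSub A S).mulVec η‖ := by
            have := hC S hScard η
            simpa [Matrix.mulVecLin_apply] using this
        _ ≤ C S * (‖y‖ + ε) := by gcongr; exact hC0 S
    have hxi : |x i| ≤ ‖η‖ := by
      have := norm_le_pi_norm η ⟨i, hi⟩
      simpa [hη, Real.norm_eq_abs] using this
    calc |x i| ≤ ‖η‖ := hxi
      _ ≤ C S * (‖y‖ + ε) := hbound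
      _ ≤ D * (‖y‖ + ε) := by gcongr; exact Finset.le_sup' C (Finset.mem_univ S)
  · have : x i = 0 := by
      by_contra hxi
      exact hi (by simp [hS, spt, hxi])
    rw [this]
    simpa using mul_nonneg hDnn hyε
end

section
/- Let S ⊆ {1,…,n} with |S| = k, and suppose there is a nonzero Δ ∈ ℝ^S with A_S Δ = 0 and B_S Δ = 0. Then for any x* supported on S that is feasible for T = {x : ‖y − Ax‖₂ ≤ ε, Bx ≤ b}, there exists a feasible x̄ ∈ T with ‖x̄‖₀ ≤ k − 1 and supp(x̄) ⊆ S. -/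
/-!
Extended by zero, `Δ` is a direction in which neither `A x` nor `B x` changes, so every point
`x* - t Δ` stays feasible and supported on `S`; the step `t = x*_j / Δ_j` also kills coordinate `j`.
-/

open Matrix Finset

noncomputable def extendByZero {n : ℕ} {S : Finset (Fin n)} (Δ : {j // j ∈ S} → ℝ) :
    Fin n → ℝ :=
  fun i => if h : i ∈ S then Δ ⟨i, h⟩ else 0

theorem extendByZero_apply_coe {n : ℕ} {S : Finset (Fin n)} (Δ : {j // j ∈ S} → ℝ)
    (j : {j // j ∈ S}) : extendByZero Δ j = Δ j := by
  simp [extendByZero]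

theorem spt_extendByZero_subset {n : ℕ} {S : Finset (Fin n)} (Δ : {j // j ∈ S} → ℝ) :
    spt (extendByZero Δ) ⊆ S := by
  intro i hi
  by_contra hiS
  simp [spt, extendByZero, hiS] at hi

theorem mulVec_extendByZero {p n : ℕ} (M : Matrix (Fin p) (Fin n) ℝ) {S : Finset (Fin n)}
    (Δ : {j // j ∈ S} → ℝ) : M *ᵥ extendByZero Δ = colSub M S *ᵥ Δ := by
  ext i
  simp only [mulVec, dotProduct, colSub, submatrix_apply, id, extendByZero, mul_dite,
    mul_zero]
  exact (sum_attach_eq_sum_dite S fun j => M i j * Δ j).symm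

theorem feasible_sub_smul {m l n : ℕ} {A : Matrix (Fin m) (Fin n) ℝ}
    {B : Matrix (Fin l) (Fin n) ℝ} {y : Fin m → ℝ} {b : Fin l → ℝ} {ε : ℝ} {x d : Fin n → ℝ}
    (hAd : A *ᵥ d = 0) (hBd : B *ᵥ d = 0) (hx : feasible A B y b ε x) (t : ℝ) :
    feasible A B y b ε (x - t • d) := by
  simpa only [feasible, mulVec_sub, mulVec_smul, hAd, hBd, smul_zero, sub_zero] using hx

theorem spt_sub_smul_subset_erase {n : ℕ} {S : Finset (Fin n)} {x d : Fin n → ℝ}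
    (hx : spt x ⊆ S) (hd : spt d ⊆ S) {j : Fin n} (hdj : d j ≠ 0) :
    spt (x - (x j / d j) • d) ⊆ S.erase j := by
  intro i hi
  simp only [spt, mem_filter, mem_univ, true_and, Pi.sub_apply, Pi.smul_apply,
    smul_eq_mul] at hi
  refine mem_erase.mpr ⟨?_, ?_⟩
  · rintro rfl
    exact hi (by field_simp; ring)
  · by_contra hiS
    have hxi : x i = 0 := by simpa [spt] using mt (@hx i) hiS
    have hdi : d i = 0 := by simpa [spt] using mt (@hd i) hiS
    exact hi (by simp [hxi, hdi])

theorem stmt12_general {m l n : ℕ} (A : Matrix (Fin m) (Fin n) ℝ) (B : Matrix (Fin l) (Fin n) ℝ)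
    (y : Fin m → ℝ) (b : Fin l → ℝ) (ε : ℝ)
    (S : Finset (Fin n)) (k : ℕ) (hcard : S.card = k)
    (Δ : {j // j ∈ S} → ℝ) (hΔ : Δ ≠ 0)
    (hAΔ : (colSub A S).mulVec Δ = 0) (hBΔ : (colSub B S).mulVec Δ = 0)
    (xs : Fin n → ℝ) (hsupp : spt xs ⊆ S) (hfeas : feasible A B y b ε xs) :
    ∃ xb : Fin n → ℝ, feasible A B y b ε xb ∧ l0 xb ≤ k - 1 ∧ spt xb ⊆ S := by
  obtain ⟨j, hj⟩ := Function.ne_iff.mp hΔ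
  have hdj : extendByZero Δ j ≠ 0 := by rwa [extendByZero_apply_coe]
  set d := extendByZero Δ
  have hspt := spt_sub_smul_subset_erase hsupp (spt_extendByZero_subset Δ) hdj
  refine ⟨xs - (xs j / d j) • d, ?_, ?_, hspt.trans (erase_subset _ _)⟩
  · exact feasible_sub_smul (by rw [mulVec_extendByZero, hAΔ])
      (by rw [mulVec_extendByZero, hBΔ]) hfeas _
  · calc l0 (xs - (xs j / d j) • d) = (spt (xs - (xs j / d j) • d)).card := rfl
      _ ≤ (S.erase j).card := card_le_card hspt
      _ = k - 1 := by rw [card_erase_of_mem j.2, hcard]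

/-- reduction step — a nonzero common null vector of A_S and B_S lets
us sparsify any feasible point supported on S. -/
theorem stmt12 {m l n : ℕ} (A : Matrix (Fin m) (Fin n) ℝ) (B : Matrix (Fin l) (Fin n) ℝ)
    (y : Fin m → ℝ) (b : Fin l → ℝ) (ε : ℝ) (hε : 0 ≤ ε)
    (S : Finset (Fin n)) (k : ℕ) (hcard : S.card = k)
    (Δ : {j // j ∈ S} → ℝ) (hΔ : Δ ≠ 0)
    (hAΔ : (colSub A S).mulVec Δ = 0) (hBΔ : (colSub B S).mulVec Δ = 0)
    (xs : Fin n → ℝ) (hsupp : spt xs ⊆ S) (hfeas : feasible A B y b ε xs) :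
    ∃ xb : Fin n → ℝ, feasible A B y b ε xb ∧ l0 xb ≤ k - 1 ∧ spt xb ⊆ S :=
  stmt12_general A B y b ε S k hcard Δ hΔ hAΔ hBΔ xs hsupp hfeas
end
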